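/- With H₁,…,H₄ the 5×2 matrices of the previous statement, the vectors V₁₃ = V₂₃ = (0,−1), V₁₄ = V₂₄ = (−1,0), V₃₁ = (0,1), V₃₂ = (1,−1), V₄₁ = (−1,0), V₄₂ = (1,1) satisfy the three alignment equations: H₂V₂₃ + H₂V₂₄ + H₃V₃₂ + H₄V₄₂ = 0; H₁V₁₃ + H₁V₁₄ + H₃V₃₁ + H₄V₄₁ = 0; H₁V₁₄ + H₂V₂₄ + H₄V₄₁ + H₄V₄₂ = 0; and moreover the fourth equation H₁V₁₃ + H₂V₂₃ + H₃V₃₁ + H₃V₃₂ = 0 holds automatically as the sum of the first two equations minus the third. -/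
import Mathlib

open Matrix

def H1 : Matrix (Fin 5) (Fin 2) ℚ := !![1,0; 0,1; 0,0; 0,0; 0,0]
def H2 : Matrix (Fin 5) (Fin 2) ℚ := !![0,0; 0,0; 1,0; 0,1; 0,0]
def H3 : Matrix (Fin 5) (Fin 2) ℚ := !![0,1; 1,1; 0,0; 1,0; 0,1]
def H4 : Matrix (Fin 5) (Fin 2) ℚ := !![0,1; 0,0; 0,1; 0,0; 1,0]

def V13 : Fin 2 → ℚ := ![0, -1]
def V14 : Fin 2 → ℚ := ![-1, 0]
def V23 : Fin 2 → ℚ := ![0, -1]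
def V24 : Fin 2 → ℚ := ![-1, 0]
def V31 : Fin 2 → ℚ := ![0, 1]
def V32 : Fin 2 → ℚ := ![1, -1]
def V41 : Fin 2 → ℚ := ![-1, 0]
def V42 : Fin 2 → ℚ := ![1, 1]

theorem alignment_equations_X :
    H2 *ᵥ V23 + H2 *ᵥ V24 + H3 *ᵥ V32 + H4 *ᵥ V42 = 0 ∧
    H1 *ᵥ V13 + H1 *ᵥ V14 + H3 *ᵥ V31 + H4 *ᵥ V41 = 0 ∧
    H1 *ᵥ V14 + H2 *ᵥ V24 + H4 *ᵥ V41 + H4 *ᵥ V42 = 0 ∧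
    (H2 *ᵥ V23 + H2 *ᵥ V24 + H3 *ᵥ V32 + H4 *ᵥ V42) +
        (H1 *ᵥ V13 + H1 *ᵥ V14 + H3 *ᵥ V31 + H4 *ᵥ V41) -
        (H1 *ᵥ V14 + H2 *ᵥ V24 + H4 *ᵥ V41 + H4 *ᵥ V42) =
      H1 *ᵥ V13 + H2 *ᵥ V23 + H3 *ᵥ V31 + H3 *ᵥ V32 ∧
    H1 *ᵥ V13 + H2 *ᵥ V23 + H3 *ᵥ V31 + H3 *ᵥ V32 = 0 := by
  refine ⟨?_, ?_, ?_, ?_, ?_⟩ <;>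
  · funext i
    fin_cases i <;>
      simp [H1, H2, H3, H4, V13, V14, V23, V24, V31, V32, V41, V42,
        mulVec, dotProduct, Fin.sum_univ_two]
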